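/- arXiv:1003.4017 — 5 statements merged into one kernel-verified Lean document; each statement's English description precedes it below -/
import Mathlib

section
/- Strong Abelian Property: Let ρ be a rotor configuration and σ a chip configuration on a finite directed multigraph G with a nonempty sink set S, and let V' = V∖S. Given two functions u₁, u₂ : V' → ℕ, write F^{u_i}(ρ,σ) = (ρ_i, σ_i) for i = 1,2. If σ₁ = σ₂ on V', and both ρ₁ and ρ₂ are acyclic, then u₁ = u₂. -/
/-- A finite directed multigraph `G = (V, E)` (loops and multiple edges allowed),
with source and target maps `src, tgt : E → V`, a nonempty set `S` of sinks
(`V' = V \ S`), and, for each vertex, a fixed cyclic ordering of the multiset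
`E_v = {e : src e = v}` of outgoing edges, recorded by the successor map
`nxt : E → E`, `e = e_v^i ↦ e⁺ = e_v^{i+1 mod d_v}`: it preserves sources and
acts transitively (hence cyclically) on each `E_v`. -/
structure RotorSystem where
  V : Type
  E : Type
  [fintV : Fintype V]
  [decV : DecidableEq V]
  [decE : DecidableEq E]
  [fintE : Fintype E]
  src : E → V
  tgt : E → V
  nxt : E → E
  nxt_src : ∀ e, src (nxt e) = src e
  nxt_cyclic : ∀ e e', src e = src e' → ∃ k : ℕ, nxt^[k] e = e'
  S : Set V
  [decS : DecidablePred (· ∈ S)]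
  S_nonempty : S.Nonempty

attribute [instance] RotorSystem.fintV RotorSystem.decV RotorSystem.decE
  RotorSystem.fintE RotorSystem.decS

namespace RotorSystem

variable (G : RotorSystem)

/-- `ρ : V → E` is a rotor configuration if `ρ(v) ∈ E_v` for every non-sink
vertex `v ∈ V' = V \ S` (the values at sinks are irrelevant). -/
def IsRotorConfig (ρ : G.V → G.E) : Prop := ∀ v, v ∉ G.S → G.src (ρ v) = v

/-- Firing a vertex `v ∈ V'`: the rotor at `v` is advanced from `ρ(v)` to
`ρ(v)⁺`, one chip is removed at `v`, and one chip is added at the target of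
`ρ(v)⁺`.  (Chip counts may go negative.) -/
def fire (v : G.V) (s : (G.V → G.E) × (G.V → ℤ)) : (G.V → G.E) × (G.V → ℤ) :=
  (Function.update s.1 v (G.nxt (s.1 v)),
   fun w => s.2 w - (if w = v then 1 else 0)
              + (if w = G.tgt (G.nxt (s.1 v)) then 1 else 0))

/-- Firing the vertices of a list in order.  `F^u (ρ,σ)` is `fireList L (ρ,σ)`
for any list `L` in which each `v ∈ V'` occurs exactly `u(v)` times (by
commutativity of the firing operators the result does not depend on `L`). -/
def fireList (L : List G.V) (s : (G.V → G.E) × (G.V → ℤ)) :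
    (G.V → G.E) × (G.V → ℤ) :=
  L.foldl (fun s v => G.fire v s) s

/-- A rotor configuration `ρ` is acyclic if the spanning subgraph
`(V, ρ(V'))` has no directed cycles: there is no `k ≥ 1` and vertices
`f 0, f 1, …, f k` with `f k = f 0`, each `f i ∈ V'` for `i < k`, and each
`f (i+1)` the head of the rotor edge `ρ(f i)`. -/
def Acyclic (ρ : G.V → G.E) : Prop :=
  ∀ (k : ℕ) (f : ℕ → G.V), 0 < k → (∀ i < k, f i ∉ G.S) →
    (∀ i < k, f (i + 1) = G.tgt (ρ (f i))) → f k ≠ f 0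

end RotorSystem

/-!
Firing each `v` a total of `c v` times, in any order, advances the rotor at `v` by `c v` steps
and sends one chip along each edge it passes, which gives `F^c (ρ, σ)` in closed form.
Suppose `σ₁ = σ₂` on `V'` and let `A = {v | u₂ v < u₁ v} ⊆ V'`. Comparing the chips that arrive
in `A` with the chips that the extra firings of `A` send out, conservation forces every one of
these extra chips to stay in `A`; in particular the final rotor `ρ₁(v)` of each `v ∈ A` points
into `A`. Following the rotors of `ρ₁` inside the finite set `A` then closes a cycle, so `A = ∅`
when `ρ₁` is acyclic, i.e. `u₁ ≤ u₂`. By symmetry `u₁ = u₂`.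
-/

open Finset

theorem eq_zero_of_balanced {ι : Type*} [Fintype ι] [DecidableEq ι] (n : ι → ι → ℤ)
    (A : Finset ι) (hbal : ∀ v ∈ A, ∑ w, n v w = ∑ w, n w v)
    (hout : ∀ v ∈ A, ∀ w ∉ A, 0 ≤ n v w) (hin : ∀ v ∉ A, ∀ w ∈ A, n v w ≤ 0) :
    ∀ v ∈ A, ∀ w ∉ A, n v w = 0 := by
  have hsplit (f : ι → ℤ) : ∑ w, f w = ∑ w ∈ A, f w + ∑ w ∈ Aᶜ, f w :=
    (sum_add_sum_compl A f).symm
  have hcount : ∑ v ∈ A, ∑ w, n v w = ∑ v, ∑ w ∈ A, n v w := by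
    rw [sum_congr rfl hbal, sum_comm]
  have hinflow : ∑ v ∈ Aᶜ, ∑ w ∈ A, n v w ≤ 0 :=
    sum_nonpos fun v hv => sum_nonpos fun w hw => hin v (mem_compl.1 hv) w hw
  have hout' (v : ι) (hv : v ∈ A) : ∀ w ∈ Aᶜ, 0 ≤ n v w := fun w hw => hout v hv w (mem_compl.1 hw)
  have houtflow : ∑ v ∈ A, ∑ w ∈ Aᶜ, n v w = 0 := by
    refine le_antisymm ?_ (sum_nonneg fun v hv => sum_nonneg (hout' v hv))
    simp only [hsplit, sum_add_distrib] at hcount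
    linarith
  intro v hv w hw
  have hrow := (sum_eq_zero_iff_of_nonneg fun v hv => sum_nonneg (hout' v hv)).1 houtflow v hv
  exact (sum_eq_zero_iff_of_nonneg (hout' v hv)).1 hrow w (mem_compl.2 hw)

namespace RotorSystem

variable {G : RotorSystem}

/-- The number of chips that firing `v` a total of `u` times, starting from the rotor `ρ v`,
sends to `w`. -/
def chips (ρ : G.V → G.E) (v : G.V) (u : ℕ) (w : G.V) : ℤ :=
  ∑ j ∈ range u, if w = G.tgt (G.nxt^[j + 1] (ρ v)) then 1 else 0

/-- `F^c (ρ, σ)` in closed form. -/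
def state (ρ : G.V → G.E) (σ : G.V → ℤ) (c : G.V → ℕ) : (G.V → G.E) × (G.V → ℤ) :=
  (fun v => G.nxt^[c v] (ρ v), fun w => σ w - c w + ∑ v, chips ρ v (c v) w)

lemma chips_succ (ρ : G.V → G.E) (v : G.V) (u : ℕ) (w : G.V) :
    chips ρ v (u + 1) w = chips ρ v u w + if w = G.tgt (G.nxt^[u + 1] (ρ v)) then 1 else 0 :=
  sum_range_succ _ _

lemma sum_chips (ρ : G.V → G.E) (v : G.V) (u : ℕ) : ∑ w, chips ρ v u w = u := by
  simp only [chips]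
  rw [sum_comm]
  simp only [sum_ite_eq', mem_univ, if_true, sum_const, card_range, nsmul_eq_mul, mul_one]

lemma chips_mono (ρ : G.V → G.E) (v : G.V) {u u' : ℕ} (h : u ≤ u') (w : G.V) :
    chips ρ v u w ≤ chips ρ v u' w :=
  sum_le_sum_of_subset_of_nonneg (range_subset_range.2 h) fun _ _ _ => by positivity

lemma chips_add_one_le (ρ : G.V → G.E) (v : G.V) {u u' : ℕ} (h : u < u') :
    chips ρ v u (G.tgt (G.nxt^[u'] (ρ v))) + 1 ≤ chips ρ v u' (G.tgt (G.nxt^[u'] (ρ v))) := by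
  obtain ⟨k, rfl⟩ := Nat.exists_eq_add_of_lt h
  rw [chips_succ, if_pos rfl]
  gcongr
  exact chips_mono ρ v (by omega) _

lemma sum_chips_update (ρ : G.V → G.E) (c : G.V → ℕ) (x w : G.V) :
    ∑ v, chips ρ v (Function.update c x (c x + 1) v) w
      = ∑ v, chips ρ v (c v) w + if w = G.tgt (G.nxt^[c x + 1] (ρ x)) then 1 else 0 := by
  rw [← add_sum_erase _ _ (mem_univ x), ← add_sum_erase _ _ (mem_univ x), Function.update_self,
    chips_succ, add_right_comm]
  congr 2
  exact sum_congr rfl fun v hv => by rw [Function.update_of_ne (ne_of_mem_erase hv)]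

lemma fire_state (ρ : G.V → G.E) (σ : G.V → ℤ) (c : G.V → ℕ) (x : G.V) :
    G.fire x (state ρ σ c) = state ρ σ (Function.update c x (c x + 1)) := by
  refine Prod.ext (funext fun v => ?_) (funext fun w => ?_)
  · by_cases h : v = x
    · subst h; simp [fire, state, Function.iterate_succ_apply']
    · simp [fire, state, h]
  · dsimp only [fire, state]
    rw [sum_chips_update, Function.iterate_succ_apply']
    by_cases h : w = x
    · subst h; simp only [Function.update_self, if_true]; push_cast; split_ifs <;> ring
    · simp only [Function.update_of_ne h, h, if_false]; split_ifs <;> ring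

lemma fireList_state (ρ : G.V → G.E) (σ : G.V → ℤ) (L : List G.V) (c : G.V → ℕ) :
    G.fireList L (state ρ σ c) = state ρ σ (fun v => c v + L.count v) := by
  induction L generalizing c with
  | nil => simp [fireList]
  | cons a L ih =>
    simp only [fireList, List.foldl_cons] at ih ⊢
    rw [fire_state, ih]
    congr; funext v
    by_cases h : v = a
    · subst h; simp; omega
    · simp [Function.update_of_ne h, Ne.symm h]

lemma fireList_eq_state (ρ : G.V → G.E) (σ : G.V → ℤ) (L : List G.V) :
    G.fireList L (ρ, σ) = state ρ σ (fun v => L.count v) := by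
  simpa [state, chips] using fireList_state ρ σ L 0

theorem Acyclic.eq_empty_of_mapsTo {ρ : G.V → G.E} (h : G.Acyclic ρ) {A : Set G.V}
    (hS : A ⊆ G.Sᶜ) (hA : Set.MapsTo (G.tgt ∘ ρ) A A) : A = ∅ := by
  refine Set.eq_empty_of_forall_notMem fun a ha => ?_
  set f : ℕ → G.V := fun i => (G.tgt ∘ ρ)^[i] a
  have hfA (i : ℕ) : f i ∈ A := hA.iterate i ha
  have hf (i : ℕ) : f (i + 1) = G.tgt (ρ (f i)) := Function.iterate_succ_apply' _ _ _
  have hcycle {i j : ℕ} (hij : i < j) : f j ≠ f i := by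
    have := h (j - i) (fun m => f (i + m)) (by omega) (fun m _ => hS (hfA _))
      (fun m _ => hf (i + m))
    simpa [Nat.add_sub_cancel' hij.le] using this
  obtain ⟨i, j, hne, hij⟩ := Finite.exists_ne_map_eq_of_infinite f
  rcases hne.lt_or_gt with hlt | hlt
  · exact hcycle hlt hij.symm
  · exact hcycle hlt hij

theorem lt_tgt_of_lt {ρ : G.V → G.E} {σ : G.V → ℤ} {u₁ u₂ : G.V → ℕ}
    (hu₁ : ∀ v ∈ G.S, u₁ v = 0)
    (hσ : ∀ w ∉ G.S, (state ρ σ u₁).2 w = (state ρ σ u₂).2 w) {v : G.V} (hv : u₂ v < u₁ v) :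
    u₂ (G.tgt ((state ρ σ u₁).1 v)) < u₁ (G.tgt ((state ρ σ u₁).1 v)) := by
  set A := univ.filter fun v => u₂ v < u₁ v
  have hA {v : G.V} : v ∈ A ↔ u₂ v < u₁ v := by simp [A]
  set n : G.V → G.V → ℤ := fun v w => chips ρ v (u₁ v) w - chips ρ v (u₂ v) w
  have hsent (v : G.V) : ∑ w, n v w = u₁ v - u₂ v := by
    simp only [n, sum_sub_distrib, sum_chips]
  have hreceived {w : G.V} (hw : w ∈ A) : ∑ v, n v w = u₁ w - u₂ w := by
    have hwS : w ∉ G.S := fun hS => by simpa [hu₁ w hS] using hA.1 hw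
    have := hσ w hwS
    simp only [state] at this
    simp only [n, sum_sub_distrib]
    linarith
  have hzero := eq_zero_of_balanced n A (fun w hw => by rw [hsent, hreceived hw])
    (fun v hv w _ => sub_nonneg.2 (chips_mono ρ v (hA.1 hv).le w))
    (fun v hv w _ => sub_nonpos.2 (chips_mono ρ v (not_lt.1 (mt hA.2 hv)) w))
  by_contra hw
  have hnone := hzero v (hA.2 hv) _ (mt hA.1 hw)
  have hone := chips_add_one_le ρ v hv
  simp only [n, state] at hnone hone
  linarith

theorem le_of_state_eq {ρ : G.V → G.E} {σ : G.V → ℤ} {u₁ u₂ : G.V → ℕ}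
    (hu₁ : ∀ v ∈ G.S, u₁ v = 0)
    (hσ : ∀ w ∉ G.S, (state ρ σ u₁).2 w = (state ρ σ u₂).2 w)
    (hacyc : G.Acyclic (state ρ σ u₁).1) : u₁ ≤ u₂ := by
  intro v
  by_contra hv
  have hempty := hacyc.eq_empty_of_mapsTo (A := {v | u₂ v < u₁ v})
    (fun w hw hS => by simp [hu₁ w hS] at hw) (fun w hw => lt_tgt_of_lt hu₁ hσ hw)
  exact hempty.subset (not_le.1 hv)

end RotorSystem

theorem strong_abelian_property_general (G : RotorSystem)
    (ρ : G.V → G.E) (σ : G.V → ℤ)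
    (u₁ u₂ : G.V → ℕ) (hu₁ : ∀ v ∈ G.S, u₁ v = 0) (hu₂ : ∀ v ∈ G.S, u₂ v = 0)
    (L₁ L₂ : List G.V)
    (hL₁ : ∀ v, L₁.count v = u₁ v) (hL₂ : ∀ v, L₂.count v = u₂ v)
    (ρ₁ ρ₂ : G.V → G.E) (σ₁ σ₂ : G.V → ℤ)
    (h₁ : G.fireList L₁ (ρ, σ) = (ρ₁, σ₁))
    (h₂ : G.fireList L₂ (ρ, σ) = (ρ₂, σ₂))
    (hσ : ∀ v, v ∉ G.S → σ₁ v = σ₂ v)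
    (hacyc₁ : G.Acyclic ρ₁) (hacyc₂ : G.Acyclic ρ₂) :
    u₁ = u₂ := by
  have e₁ : RotorSystem.state ρ σ u₁ = (ρ₁, σ₁) := by
    rw [← h₁, RotorSystem.fireList_eq_state, funext hL₁]
  have e₂ : RotorSystem.state ρ σ u₂ = (ρ₂, σ₂) := by
    rw [← h₂, RotorSystem.fireList_eq_state, funext hL₂]
  have hσ' : ∀ w ∉ G.S, (RotorSystem.state ρ σ u₁).2 w = (RotorSystem.state ρ σ u₂).2 w := by
    simpa [e₁, e₂] using hσ
  exact le_antisymm (RotorSystem.le_of_state_eq hu₁ hσ' (by rwa [e₁]))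
    (RotorSystem.le_of_state_eq hu₂ (fun w hw => (hσ' w hw).symm) (by rwa [e₂]))

/-- **Strong Abelian Property** (Theorem 2.1).  Let `ρ` be a rotor configuration
and `σ` a chip configuration on `G`.  Given `u₁, u₂ : V' → ℕ` (encoded as
functions on `V` vanishing on `S`), write `F^{uᵢ}(ρ,σ) = (ρᵢ,σᵢ)`, where `F^{uᵢ}`
is realized by firing along any list `Lᵢ` containing each vertex `v` exactly
`uᵢ(v)` times.  If `σ₁ = σ₂` on `V'` and both `ρ₁` and `ρ₂` are acyclic, then
`u₁ = u₂`. -/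
theorem strong_abelian_property (G : RotorSystem)
    (ρ : G.V → G.E) (hρ : G.IsRotorConfig ρ) (σ : G.V → ℤ)
    (u₁ u₂ : G.V → ℕ) (hu₁ : ∀ v ∈ G.S, u₁ v = 0) (hu₂ : ∀ v ∈ G.S, u₂ v = 0)
    (L₁ L₂ : List G.V)
    (hL₁ : ∀ v, L₁.count v = u₁ v) (hL₂ : ∀ v, L₂.count v = u₂ v)
    (ρ₁ ρ₂ : G.V → G.E) (σ₁ σ₂ : G.V → ℤ)
    (h₁ : G.fireList L₁ (ρ, σ) = (ρ₁, σ₁))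
    (h₂ : G.fireList L₂ (ρ, σ) = (ρ₂, σ₂))
    (hσ : ∀ v, v ∉ G.S → σ₁ v = σ₂ v)
    (hacyc₁ : G.Acyclic ρ₁) (hacyc₂ : G.Acyclic ρ₂) :
    u₁ = u₂ :=
  strong_abelian_property_general G ρ σ u₁ u₂ hu₁ hu₂ L₁ L₂ hL₁ hL₂ ρ₁ ρ₂ σ₁ σ₂ h₁ h₂ hσ hacyc₁
    hacyc₂
end

section
/- Let ρ be a rotor configuration and σ a chip configuration on a finite directed multigraph G with a nonempty sink set S, let V' = V∖S, let u : V' → ℕ, and write F^u(ρ,σ) = (ρ₁,σ₁). If σ = σ₁ and ρ₁ is acyclic, then u = 0. -/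
namespace RotorSystem

variable (G : RotorSystem)

def recv (ρ : G.V → G.E) (c : G.V → ℕ) (w : G.V) : ℕ :=
  ∑ v : G.V, ((Finset.range (c v)).filter (fun j => w = G.tgt (G.nxt^[j+1] (ρ v)))).card

lemma recv_succ (ρ : G.V → G.E) (c : G.V → ℕ) (a w : G.V) :
    G.recv ρ (fun v => c v + if v = a then 1 else 0) w
      = G.recv ρ c w + (if w = G.tgt (G.nxt^[c a + 1] (ρ a)) then 1 else 0) := by
  unfold recv
  rw [← Finset.sum_erase_add _ _ (Finset.mem_univ a),
      ← Finset.sum_erase_add _ _ (Finset.mem_univ a)]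
  have h1 : ∀ v ∈ Finset.univ.erase a,
      ((Finset.range (c v + if v = a then 1 else 0)).filter
        (fun j => w = G.tgt (G.nxt^[j+1] (ρ v)))).card
      = ((Finset.range (c v)).filter (fun j => w = G.tgt (G.nxt^[j+1] (ρ v)))).card := by
    intro v hv
    rw [Finset.mem_erase] at hv
    simp only [hv.1, ↓reduceIte, add_zero]
  rw [Finset.sum_congr rfl h1]
  simp only [if_pos rfl, if_true]
  rw [Finset.range_add_one, Finset.filter_insert]
  split_ifs with hta
  · rw [Finset.card_insert_of_notMem (by simp [-Function.iterate_succ])]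
    ring
  · ring

lemma fireList_eq (ρ : G.V → G.E) (σ : G.V → ℤ) (L : List G.V) :
    G.fireList L (ρ, σ) =
      (fun v => G.nxt^[L.count v] (ρ v),
       fun w => σ w - L.count w + G.recv ρ (fun v => L.count v) w) := by
  induction L using List.reverseRecOn with
  | nil => simp [fireList, recv, -Function.iterate_succ]
  | append_singleton L a ih =>
      have hstep : G.fireList (L ++ [a]) (ρ, σ) = G.fire a (G.fireList L (ρ, σ)) := by
        simp [fireList, List.foldl_append]
      have hcount : ∀ v : G.V, (L ++ [a]).count v = L.count v + if v = a then 1 else 0 := by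
        intro v
        by_cases hv : v = a <;> simp [List.count_append, hv, @eq_comm _ a]
      rw [hstep, ih, fire]
      refine Prod.ext ?_ ?_
      · funext v
        by_cases hv : v = a
        · subst hv
          simp [Function.update, hcount, Function.iterate_succ_apply']
        · simp [Function.update, hcount, hv]
      · funext w
        simp only [hcount]
        rw [recv_succ]
        have : G.nxt (G.nxt^[L.count a] (ρ a)) = G.nxt^[L.count a + 1] (ρ a) :=
          (Function.iterate_succ_apply' _ _ _).symm
        rw [this]
        push_cast
        split_ifs <;> ring

end RotorSystem


/-- **Lemma 2.2.**  Let `ρ` be a rotor configuration and `σ` a chip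
configuration on `G`, let `u : V' → ℕ` (encoded as a function on `V` vanishing
on `S`), and write `F^u(ρ,σ) = (ρ₁,σ₁)`, realized by firing along any list `L`
containing each vertex `v` exactly `u(v)` times.  If `σ = σ₁` and `ρ₁` is
acyclic, then `u = 0`. -/
theorem must_cycle (G : RotorSystem)
    (ρ : G.V → G.E) (hρ : G.IsRotorConfig ρ) (σ : G.V → ℤ)
    (u : G.V → ℕ) (hu : ∀ v ∈ G.S, u v = 0)
    (L : List G.V) (hL : ∀ v, L.count v = u v)
    (ρ₁ : G.V → G.E) (σ₁ : G.V → ℤ)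
    (h : G.fireList L (ρ, σ) = (ρ₁, σ₁))
    (hσ : σ = σ₁) (hacyc : G.Acyclic ρ₁) :
    u = 0 := by
  have hLu : (fun v : G.V => (L.count v : ℕ)) = u := funext hL
  have hfe := G.fireList_eq ρ σ L
  rw [h] at hfe
  simp only [hL] at hfe
  rw [Prod.mk.injEq] at hfe
  obtain ⟨hρ₁, hσ₁⟩ := hfe
  have hrecv : ∀ w, u w = G.recv ρ u w := by
    intro w
    have : σ w = σ w - u w + G.recv ρ u w := by
      conv_lhs => rw [hσ, hσ₁]
    have : (u w : ℤ) = (G.recv ρ u w : ℤ) := by linarith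
    exact_mod_cast this
  have step : ∀ v : G.V, 0 < u v → 0 < u (G.tgt (G.nxt^[u v] (ρ v))) := by
    intro v hv
    set w := G.tgt (G.nxt^[u v] (ρ v)) with hw
    have hcard : 0 < ((Finset.range (u v)).filter
        (fun j => w = G.tgt (G.nxt^[j+1] (ρ v)))).card := by
      apply Finset.card_pos.mpr
      refine ⟨u v - 1, Finset.mem_filter.mpr ⟨Finset.mem_range.mpr (by omega), ?_⟩⟩
      rw [Nat.sub_add_cancel hv]
    have hle : ((Finset.range (u v)).filter
        (fun j => w = G.tgt (G.nxt^[j+1] (ρ v)))).card ≤ G.recv ρ u w := by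
      unfold RotorSystem.recv
      exact Finset.single_le_sum
        (f := fun v => ((Finset.range (u v)).filter
          (fun j => w = G.tgt (G.nxt^[j+1] (ρ v)))).card)
        (fun _ _ => Nat.zero_le _) (Finset.mem_univ v)
    have := lt_of_lt_of_le hcard hle
    rw [← hrecv w] at this
    exact this
  by_contra hne
  have hex : ∃ v0, 0 < u v0 := by
    by_contra h0
    push_neg at h0
    exact hne (funext fun v => Nat.le_zero.mp (h0 v))
  obtain ⟨v0, hv0⟩ := hex
  let f : ℕ → G.V := fun n => Nat.rec v0 (fun _ x => G.tgt (G.nxt^[u x] (ρ x))) n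
  have hfs : ∀ n, f (n+1) = G.tgt (G.nxt^[u (f n)] (ρ (f n))) := fun n => rfl
  have hupos : ∀ n, 0 < u (f n) := by
    intro n; induction n with
    | zero => exact hv0
    | succ n ih => rw [hfs]; exact step _ ih
  have hns : ∀ n, f n ∉ G.S := by
    intro n hn
    have h1 := hu _ hn
    have h2 := hupos n
    omega
  have hnext : ∀ n, f (n+1) = G.tgt (ρ₁ (f n)) := by
    intro n; rw [hfs, hρ₁]
  have key : ∀ x y : ℕ, x < y → f x = f y → False := by
    intro x y hlt hfeq
    have := hacyc (y - x) (fun n => f (x + n)) (by omega)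
      (fun i _ => hns (x + i)) (fun i _ => hnext (x + i))
    apply this
    show f (x + (y - x)) = f (x + 0)
    rw [Nat.add_sub_cancel' hlt.le, Nat.add_zero]
    exact hfeq.symm
  obtain ⟨x, y, hxy, hfeq⟩ := Finite.exists_ne_map_eq_of_infinite f
  rcases (Ne.lt_or_gt hxy) with hlt | hlt
  · exact key x y hlt hfeq
  · exact key y x hlt hfeq.symm
end

section
/- Let ρ be a rotor configuration and σ a chip configuration on a finite directed multigraph G with a nonempty sink set S, let V' = V∖S, let u₁, u₂ : V' → ℕ, and write F^{u_i}(ρ,σ) = (ρ_i,σ_i) for i = 1,2. If ρ₁ is acyclic and σ₂(v) ≤ σ₁(v) for all v ∈ V', then u₁(v) ≤ u₂(v) for all v ∈ V'. -/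
/-!
Let `A` be the set of vertices that fire more often along `L₁` than along `L₂`. Each extra firing
of a vertex costs it one chip and sends at most one chip into `A`, so `A` holds no more chips
after `L₁` than after `L₂`, and strictly fewer if the last chip sent by some `w ∈ A` — the one
sent along its final rotor `ρ₁ w` — leaves `A`. As `σ₂ ≤ σ₁` on `A ⊆ V'`, the rotors `ρ₁` map
`A` into itself, so a nonempty `A` would carry a cycle of `ρ₁`.
-/

theorem Nat.count_le_count_add_sub (p : ℕ → Prop) [DecidablePred p] (m n : ℕ) :
    Nat.count p n ≤ Nat.count p m + (n - m) := by
  rcases le_total n m with hnm | hmn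
  · exact (Nat.count_monotone p hnm).trans (Nat.le_add_right _ _)
  · obtain ⟨k, rfl⟩ := Nat.exists_eq_add_of_le hmn
    rw [Nat.count_add, Nat.add_sub_cancel_left]
    exact Nat.add_le_add_left (Nat.count_le _) _

theorem Nat.count_lt_count_add_sub (p : ℕ → Prop) [DecidablePred p] {m n : ℕ} (hmn : m < n)
    (hp : ¬ p (n - 1)) : Nat.count p n < Nat.count p m + (n - m) := by
  obtain ⟨k, rfl⟩ := Nat.exists_eq_add_of_lt hmn
  have hle := Nat.count_le_count_add_sub p m (m + k)
  rw [Nat.add_sub_cancel] at hp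
  rw [Nat.count_succ, if_neg hp]
  omega

namespace RotorSystem

variable {G : RotorSystem}

/-- The number of chips that the first `n` firings of `w`, starting from the rotor `ρ w`,
send into `A`: the `j`th of them goes to the target of `nxt^[j] (ρ w)`. -/
def sentInto (ρ : G.V → G.E) (w : G.V) (A : Finset G.V) (n : ℕ) : ℕ :=
  Nat.count (fun j => G.tgt (G.nxt^[j + 1] (ρ w)) ∈ A) n

theorem sentInto_succ (ρ : G.V → G.E) (w : G.V) (A : Finset G.V) (n : ℕ) :
    G.sentInto ρ w A (n + 1) =
      G.sentInto ρ w A n + if G.tgt (G.nxt^[n + 1] (ρ w)) ∈ A then 1 else 0 :=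
  Nat.count_succ _ n

theorem fireList_append_singleton (L : List G.V) (a : G.V) (s : (G.V → G.E) × (G.V → ℤ)) :
    G.fireList (L ++ [a]) s = G.fire a (G.fireList L s) := by
  simp [fireList, List.foldl_append]

theorem fireList_fst (L : List G.V) (s : (G.V → G.E) × (G.V → ℤ)) (v : G.V) :
    (G.fireList L s).1 v = G.nxt^[L.count v] (s.1 v) := by
  induction L using List.reverseRecOn with
  | nil => rfl
  | append_singleton L a ih =>
    rw [fireList_append_singleton, List.count_append, List.count_singleton]
    by_cases hv : v = a
    · subst hv
      simp [fire, ih, Function.iterate_succ_apply']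
    · simp [fire, ih, hv, Ne.symm hv]

theorem sum_fire_snd (a : G.V) (s : (G.V → G.E) × (G.V → ℤ)) (A : Finset G.V) :
    ∑ v ∈ A, (G.fire a s).2 v = ∑ v ∈ A, s.2 v - (if a ∈ A then 1 else 0)
      + (if G.tgt (G.nxt (s.1 a)) ∈ A then 1 else 0) := by
  simp only [fire, Finset.sum_add_distrib, Finset.sum_sub_distrib, Finset.sum_ite_eq']

theorem sum_fireList_snd (L : List G.V) (s : (G.V → G.E) × (G.V → ℤ)) (A : Finset G.V) :
    ∑ v ∈ A, (G.fireList L s).2 v = ∑ v ∈ A, s.2 v - ∑ v ∈ A, (L.count v : ℤ)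
      + ∑ w, (G.sentInto s.1 w A (L.count w) : ℤ) := by
  induction L using List.reverseRecOn with
  | nil => simp only [List.count_nil, sentInto, Nat.count_zero]; simp [fireList]
  | append_singleton L a ih =>
    have hsent : ∑ w, (G.sentInto s.1 w A ((L ++ [a]).count w) : ℤ) =
        ∑ w, (G.sentInto s.1 w A (L.count w) : ℤ)
          + if G.tgt (G.nxt^[L.count a + 1] (s.1 a)) ∈ A then 1 else 0 := by
      rw [← Finset.add_sum_erase _ _ (Finset.mem_univ a),
        ← Finset.add_sum_erase _ (fun w => (G.sentInto s.1 w A (L.count w) : ℤ))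
          (Finset.mem_univ a)]
      have hrest : ∀ w ∈ Finset.univ.erase a, (L ++ [a]).count w = L.count w := fun w hw => by
        simp [List.count_append, (Finset.ne_of_mem_erase hw).symm]
      rw [Finset.sum_congr rfl fun w hw => by rw [hrest w hw], List.count_append,
        List.count_singleton_self, sentInto_succ]
      push_cast
      ring
    have hcount : ∑ v ∈ A, ((L ++ [a]).count v : ℤ) =
        ∑ v ∈ A, (L.count v : ℤ) + if a ∈ A then 1 else 0 := by
      simp only [List.count_append, List.count_singleton, Nat.cast_add, Finset.sum_add_distrib]
      simp
    rw [fireList_append_singleton, sum_fire_snd, ih, hsent, hcount, fireList_fst,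
      ← Function.iterate_succ_apply' G.nxt]
    ring

theorem tgt_fireList_fst_mem (L₁ L₂ : List G.V) (s : (G.V → G.E) × (G.V → ℤ))
    (A : Finset G.V) (hA : ∀ v, v ∈ A ↔ L₂.count v < L₁.count v)
    (hchips : ∑ v ∈ A, (G.fireList L₂ s).2 v ≤ ∑ v ∈ A, (G.fireList L₁ s).2 v)
    {w : G.V} (hw : w ∈ A) : G.tgt ((G.fireList L₁ s).1 w) ∈ A := by
  by_contra hout
  rw [fireList_fst] at hout
  have hsent : ∑ x, ((G.sentInto s.1 x A (L₁.count x) : ℤ) - G.sentInto s.1 x A (L₂.count x))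
      < ∑ x, ((L₁.count x - L₂.count x : ℕ) : ℤ) := by
    refine Finset.sum_lt_sum (fun x _ => ?_) ⟨w, Finset.mem_univ w, ?_⟩
    · have := Nat.count_le_count_add_sub
        (fun j => G.tgt (G.nxt^[j + 1] (s.1 x)) ∈ A) (L₂.count x) (L₁.count x)
      rw [sentInto, sentInto]
      omega
    · have hlt := (hA w).1 hw
      have := Nat.count_lt_count_add_sub
        (fun j => G.tgt (G.nxt^[j + 1] (s.1 w)) ∈ A) hlt (by rwa [Nat.sub_add_cancel (by omega)])
      rw [sentInto, sentInto]
      omega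
  have hextra : ∑ x, ((L₁.count x - L₂.count x : ℕ) : ℤ)
      = ∑ v ∈ A, ((L₁.count v : ℤ) - L₂.count v) := by
    rw [← Finset.sum_subset (Finset.subset_univ A) fun x _ hx => by
      simp [Nat.sub_eq_zero_of_le (not_lt.1 ((hA x).not.1 hx))]]
    exact Finset.sum_congr rfl fun v hv => by have := (hA v).1 hv; omega
  rw [sum_fireList_snd, sum_fireList_snd] at hchips
  rw [Finset.sum_sub_distrib] at hsent hextra
  linarith

theorem Acyclic.eq_empty_of_forall_tgt_mem {ρ : G.V → G.E} (hρ : G.Acyclic ρ)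
    (A : Finset G.V) (hS : ∀ v ∈ A, v ∉ G.S) (hA : ∀ v ∈ A, G.tgt (ρ v) ∈ A) : A = ∅ := by
  by_contra hne
  obtain ⟨v, hv⟩ := Finset.nonempty_iff_ne_empty.2 hne
  set g : G.V → G.V := fun x => G.tgt (ρ x)
  have horbit : ∀ n, g^[n] v ∈ A := fun n => by
    induction n with
    | zero => exact hv
    | succ n ih => rw [Function.iterate_succ_apply']; exact hA _ ih
  obtain ⟨i, j, hij, heq⟩ := Finite.exists_ne_map_eq_of_infinite fun n => g^[n] v
  wlog hlt : i < j generalizing i j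
  · exact this j i hij.symm heq.symm (by omega)
  refine hρ (j - i) (fun n => g^[i + n] v) (by omega) (fun n _ => hS _ (horbit _))
    (fun n _ => Function.iterate_succ_apply' g (i + n) v) ?_
  simp only [Nat.add_sub_cancel' hlt.le, Nat.add_zero]
  exact heq.symm

end RotorSystem

theorem fire_less_general (G : RotorSystem)
    (ρ : G.V → G.E) (σ : G.V → ℤ)
    (u₁ u₂ : G.V → ℕ) (hu₁ : ∀ v ∈ G.S, u₁ v = 0)
    (L₁ L₂ : List G.V)
    (hL₁ : ∀ v, L₁.count v = u₁ v) (hL₂ : ∀ v, L₂.count v = u₂ v)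
    (ρ₁ ρ₂ : G.V → G.E) (σ₁ σ₂ : G.V → ℤ)
    (h₁ : G.fireList L₁ (ρ, σ) = (ρ₁, σ₁))
    (h₂ : G.fireList L₂ (ρ, σ) = (ρ₂, σ₂))
    (hacyc₁ : G.Acyclic ρ₁)
    (hσ : ∀ v, v ∉ G.S → σ₂ v ≤ σ₁ v) :
    ∀ v, v ∉ G.S → u₁ v ≤ u₂ v := by
  intro v _
  set A := Finset.univ.filter fun w => u₂ w < u₁ w
  have hAS : ∀ w ∈ A, w ∉ G.S := fun w hw hwS => by simp [A, hu₁ w hwS] at hw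
  have hclosed : ∀ w ∈ A, G.tgt (ρ₁ w) ∈ A := fun w hw => by
    simpa only [h₁] using G.tgt_fireList_fst_mem L₁ L₂ (ρ, σ) A (by simp [A, hL₁, hL₂])
      (by rw [h₁, h₂]; exact Finset.sum_le_sum fun x hx => hσ x (hAS x hx)) hw
  have hempty := hacyc₁.eq_empty_of_forall_tgt_mem A hAS hclosed
  by_contra hlt
  simpa [A, not_le.1 hlt] using congrArg (v ∈ ·) hempty

/-- **Lemma 2.3.**  Let `ρ` be a rotor configuration and `σ` a chip
configuration on `G`, let `u₁, u₂ : V' → ℕ` (encoded as functions on `V`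
vanishing on `S`), and write `F^{uᵢ}(ρ,σ) = (ρᵢ,σᵢ)`, realized by firing along
any list `Lᵢ` containing each vertex `v` exactly `uᵢ(v)` times.  If `ρ₁` is
acyclic and `σ₂ ≤ σ₁` on `V'`, then `u₁ ≤ u₂` on `V'`. -/
theorem fire_less (G : RotorSystem)
    (ρ : G.V → G.E) (hρ : G.IsRotorConfig ρ) (σ : G.V → ℤ)
    (u₁ u₂ : G.V → ℕ) (hu₁ : ∀ v ∈ G.S, u₁ v = 0) (hu₂ : ∀ v ∈ G.S, u₂ v = 0)
    (L₁ L₂ : List G.V)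
    (hL₁ : ∀ v, L₁.count v = u₁ v) (hL₂ : ∀ v, L₂.count v = u₂ v)
    (ρ₁ ρ₂ : G.V → G.E) (σ₁ σ₂ : G.V → ℤ)
    (h₁ : G.fireList L₁ (ρ, σ) = (ρ₁, σ₁))
    (h₂ : G.fireList L₂ (ρ, σ) = (ρ₂, σ₂))
    (hacyc₁ : G.Acyclic ρ₁)
    (hσ : ∀ v, v ∉ G.S → σ₂ v ≤ σ₁ v) :
    ∀ v, v ∉ G.S → u₁ v ≤ u₂ v :=
  fire_less_general G ρ σ u₁ u₂ hu₁ L₁ L₂ hL₁ hL₂ ρ₁ ρ₂ σ₁ σ₂ h₁ h₂ hacyc₁ hσ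
end

section
/- Let ρ be a rotor configuration and σ ≥ 0 a chip configuration on a finite directed multigraph G with nonempty sink set S and V' = V∖S. Let v₁, v₂, …, v_k be a complete legal firing sequence for (ρ,σ): a sequence of vertices of V' such that, firing them in order starting from (ρ,σ), every fired vertex holds at least one chip at the moment it is fired, and the final chip configuration is 0 at every vertex of V'. Let u₁(v) = #{1 ≤ j ≤ k : v_j = v} be the odometer of this sequence. If u₁(v) > 0 for all v ∈ V', then the final rotor configuration ρ₁ (given by F^{u₁}(ρ,σ) = (ρ₁,σ₁)) is acyclic. -/
/-!
Suppose the final rotors contain a cycle, and let `v` be the cycle vertex fired last. Its final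
rotor was set by that last firing, which sent a chip to the cycle successor `w` of `v`. Chips stay
nonnegative along a legal sequence and `w`, lying on the cycle, never fires afterwards, so `w`
still holds a chip at the end, contradicting completeness.
-/

namespace RotorSystem

variable (G : RotorSystem)

abbrev Config := (G.V → G.E) × (G.V → ℤ)

def IsLegal (L : List G.V) (s : G.Config) : Prop :=
  ∀ A v B, L = A ++ v :: B → 1 ≤ (G.fireList A s).2 v

variable {G}

lemma fire_fst_self (v : G.V) (s : G.Config) : (G.fire v s).1 v = G.nxt (s.1 v) := by
  simp [fire]

lemma fire_snd_nonneg {v : G.V} {s : G.Config} (hs : ∀ w, 0 ≤ s.2 w) (hv : 1 ≤ s.2 v)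
    (w : G.V) : 0 ≤ (G.fire v s).2 w := by
  have := hs w
  simp only [fire]
  by_cases h : w = v
  · subst h; split_ifs <;> omega
  · split_ifs <;> omega

lemma one_le_fire_snd_tgt {v : G.V} {s : G.Config} (hs : ∀ w, 0 ≤ s.2 w) (hv : 1 ≤ s.2 v) :
    1 ≤ (G.fire v s).2 (G.tgt (G.nxt (s.1 v))) := by
  have := hs (G.tgt (G.nxt (s.1 v)))
  simp only [fire, if_true]
  split_ifs with h
  · rw [h] at this ⊢; omega
  · omega

lemma fireList_cons (v : G.V) (L : List G.V) (s : G.Config) :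
    G.fireList (v :: L) s = G.fireList L (G.fire v s) := rfl

lemma fireList_append (L M : List G.V) (s : G.Config) :
    G.fireList (L ++ M) s = G.fireList M (G.fireList L s) :=
  List.foldl_append

lemma fireList_fst_of_not_mem {v : G.V} {L : List G.V} (hv : v ∉ L) (s : G.Config) :
    (G.fireList L s).1 v = s.1 v := by
  induction L generalizing s with
  | nil => rfl
  | cons a L ih =>
    rw [List.mem_cons, not_or] at hv
    rw [fireList_cons, ih hv.2]
    simp [fire, Function.update_of_ne hv.1]

lemma le_fireList_snd_of_not_mem {w : G.V} {L : List G.V} (hw : w ∉ L) (s : G.Config) :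
    s.2 w ≤ (G.fireList L s).2 w := by
  induction L generalizing s with
  | nil => exact le_rfl
  | cons a L ih =>
    rw [List.mem_cons, not_or] at hw
    refine le_trans ?_ (ih hw.2 _)
    simp only [fire, if_neg hw.1]
    split_ifs <;> omega

lemma isLegal_of_getElem {L : List G.V} {s : G.Config}
    (h : ∀ (j : ℕ) (hj : j < L.length), 1 ≤ (G.fireList (L.take j) s).2 (L.get ⟨j, hj⟩)) :
    G.IsLegal L s := by
  rintro A v B rfl
  simpa using h A.length (by simp)

lemma IsLegal.fireList_snd_nonneg {L : List G.V} {s : G.Config} (hL : G.IsLegal L s)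
    (hs : ∀ w, 0 ≤ s.2 w) {A : List G.V} (hA : A <+: L) (w : G.V) :
    0 ≤ (G.fireList A s).2 w := by
  induction A using List.reverseRecOn generalizing w with
  | nil => exact hs w
  | append_singleton A v ih =>
    obtain ⟨B, rfl⟩ := hA
    rw [fireList_append]
    exact fire_snd_nonneg (ih (List.prefix_append_of_prefix (List.prefix_append A [v])))
      (hL A v B (by simp)) w

lemma IsLegal.one_le_fireList_snd_tgt {L A B : List G.V} {v : G.V} {s : G.Config}
    (hL : G.IsLegal L s) (hs : ∀ w, 0 ≤ s.2 w) (hsplit : L = A ++ v :: B) (hv : v ∉ B)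
    (hw : G.tgt ((G.fireList L s).1 v) ∉ B) :
    1 ≤ (G.fireList L s).2 (G.tgt ((G.fireList L s).1 v)) := by
  have hfinal : G.fireList L s = G.fireList B (G.fire v (G.fireList A s)) := by
    rw [hsplit, fireList_append, fireList_cons]
  rw [hfinal, fireList_fst_of_not_mem hv, fire_fst_self] at hw ⊢
  refine le_trans (one_le_fire_snd_tgt ?_ (hL A v B hsplit)) (le_fireList_snd_of_not_mem hw _)
  exact hL.fireList_snd_nonneg hs ⟨v :: B, hsplit.symm⟩

end RotorSystem

lemma List.exists_eq_append_cons_of_last {α : Type*} {p : α → Prop} {L : List α}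
    (h : ∃ x ∈ L, p x) : ∃ A x B, L = A ++ x :: B ∧ p x ∧ ∀ y ∈ B, ¬ p y := by
  induction L with
  | nil => simp at h
  | cons a L ih =>
    by_cases hL : ∃ x ∈ L, p x
    · obtain ⟨A, x, B, rfl, hx, hB⟩ := ih hL
      exact ⟨a :: A, x, B, rfl, hx, hB⟩
    · obtain ⟨x, hx, hpx⟩ := h
      rcases List.mem_cons.mp hx with rfl | hx
      · exact ⟨[], x, L, rfl, hpx, fun y hy hpy => hL ⟨y, hy, hpy⟩⟩
      · exact absurd ⟨x, hx, hpx⟩ hL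

theorem complete_legal_acyclic_general (G : RotorSystem)
    (ρ : G.V → G.E)
    (σ : G.V → ℤ) (hσ : ∀ v, 0 ≤ σ v)
    (L : List G.V)
    (hlegal : ∀ (j : ℕ) (hj : j < L.length),
      1 ≤ (G.fireList (L.take j) (ρ, σ)).2 (L.get ⟨j, hj⟩))
    (hcomplete : ∀ v, v ∉ G.S → (G.fireList L (ρ, σ)).2 v = 0)
    (hpos : ∀ v, v ∉ G.S → 0 < L.count v) :
    G.Acyclic (G.fireList L (ρ, σ)).1 := by
  intro k f hk hfS hstep hcycle
  have hL : G.IsLegal L (ρ, σ) := RotorSystem.isLegal_of_getElem hlegal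
  set onCycle : G.V → Prop := fun x => ∃ i < k, f i = x
  have hsucc : ∀ i < k, onCycle (f (i + 1)) := by
    intro i hi
    by_cases h : i + 1 < k
    · exact ⟨i + 1, h, rfl⟩
    · exact ⟨0, hk, by rw [show i + 1 = k by omega, hcycle]⟩
  obtain ⟨A, v, B, hsplit, ⟨i, hi, rfl⟩, hB⟩ := List.exists_eq_append_cons_of_last (p := onCycle)
    ⟨f 0, List.count_pos_iff.mp (hpos _ (hfS 0 hk)), 0, hk, rfl⟩
  obtain ⟨j, hj, hfj⟩ := hsucc i hi
  have hchip := hL.one_le_fireList_snd_tgt hσ hsplit (fun h => hB _ h ⟨i, hi, rfl⟩)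
    (fun h => hB _ h (hstep i hi ▸ hsucc i hi))
  rw [← hstep i hi, ← hfj, hcomplete _ (hfS j hj)] at hchip
  omega

/-- Let `ρ` be a rotor configuration and `σ ≥ 0` a chip configuration on `G`,
and let `v₁, …, v_k` (the list `L`) be a complete legal firing sequence for
`(ρ,σ)`: a sequence of vertices of `V'` such that each fired vertex holds at
least one chip at the moment it is fired, and the final chip configuration
vanishes on `V'`.  If its odometer `u₁(v) = #{j : v_j = v} = L.count v` is
positive for every `v ∈ V'`, then the final rotor configuration `ρ₁` is
acyclic. -/
theorem complete_legal_acyclic (G : RotorSystem)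
    (ρ : G.V → G.E) (hρ : G.IsRotorConfig ρ)
    (σ : G.V → ℤ) (hσ : ∀ v, 0 ≤ σ v)
    (L : List G.V) (hLS : ∀ v ∈ L, v ∉ G.S)
    (hlegal : ∀ (j : ℕ) (hj : j < L.length),
      1 ≤ (G.fireList (L.take j) (ρ, σ)).2 (L.get ⟨j, hj⟩))
    (hcomplete : ∀ v, v ∉ G.S → (G.fireList L (ρ, σ)).2 v = 0)
    (hpos : ∀ v, v ∉ G.S → 0 < L.count v) :
    G.Acyclic (G.fireList L (ρ, σ)).1 :=
  complete_legal_acyclic_general G ρ σ hσ L hlegal hcomplete hpos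
end

section
/- Fix n ≥ 1 and work in the induced subgraph D_n of the layered square lattice Ẑ², with the sites of the outer layer L_n taken as sinks. Define u_n = u'_n − 1_C as follows: for z = (x,y) ∈ D_n write ℓ_z = n−|x|−|y|; u'_n(o) = 2n(n+1) and u'_n(z) = ℓ_z(ℓ_z+1) for z ≠ o; C = ⋃_{i=0}^{3} Rⁱ(C₂ ∪ C₃) with C₂ = {(x,y) ∈ Q ∩ D_{n−1} : x > 0, y ≥ 2, ℓ_{(x,y)} ≡ 2 (mod 4)} and C₃ = {(x,y) ∈ Q ∩ D_{n−1} : x > 0, y ≥ 1, ℓ_{(x,y)} ≡ 3 (mod 4)}. Let ρ₀ be the rotor configuration ρ₀(z) = e_z^0 and define (ρ_n, σ_n) = F^{u_n}(ρ₀, (2n²+2n+1)δ_o). Then the rotor configuration ρ_n on D_{n−1} is acyclic, i.e., the subgraph formed by the rotor edges {ρ_n(z) : z ∈ D_{n−1}} has no directed cycles. -/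
/-- Clockwise rotation `R` by 90 degrees on `ℤ²` (it sends `e₂ = (0,1)` to `e₁ = (1,0)`). -/
def Rot (z : ℤ × ℤ) : ℤ × ℤ := (z.2, -z.1)

/-- The index `j ∈ {0,1,2,3}` such that `z ∈ RʲQ`, where
`Q = {(x,y) : x ≥ 0, y > 0}` (meaningful for `z ≠ o`). -/
def quadIdx (z : ℤ × ℤ) : ℕ :=
  if 0 ≤ z.1 ∧ 0 < z.2 then 0
  else if 0 < z.1 ∧ z.2 ≤ 0 then 1
  else if z.1 ≤ 0 ∧ z.2 < 0 then 2
  else 3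

/-- The target of the directed edge `e_z^i` of the layered square lattice `Ẑ²`:
for `z = Rʲw ≠ o` with `w = (x,y) ∈ Q`, the edge `e_z^i` points to `z + Rʲe₂`
if `i = 2` and `x = 0` (i.e. `z` lies on one of the axes), and to `z + R^{i+j}e₂`
otherwise; the edges at the origin point to `R^i e₂`. -/
def targ (z : ℤ × ℤ) (i : Fin 4) : ℤ × ℤ :=
  if z = (0, 0) then Rot^[(i : ℕ)] (0, 1)
  else if i = 2 ∧ (z.1 = 0 ∨ z.2 = 0) then z + Rot^[quadIdx z] (0, 1)
  else z + Rot^[(i : ℕ) + quadIdx z] (0, 1)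

/-- A rotor configuration on `Ẑ²`: the rotor at `z` is the edge `e_z^{ρ(z)}`. -/
abbrev RotorConfig := (ℤ × ℤ) → Fin 4

/-- Firing a vertex `v` of `Ẑ²`: the rotor at `v` is advanced from `e_v^i` to
`e_v^{i+1 mod 4}`, one chip is removed at `v`, and one chip is added at the
target of the new rotor.  (Chip counts may go negative.) -/
def fireLat (v : ℤ × ℤ) (s : RotorConfig × ((ℤ × ℤ) → ℤ)) :
    RotorConfig × ((ℤ × ℤ) → ℤ) :=
  (Function.update s.1 v (s.1 v + 1),
   fun w => s.2 w - (if w = v then 1 else 0)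
              + (if w = targ v (s.1 v + 1) then 1 else 0))

/-- Firing the vertices of a list in order.  `F^u (ρ,σ)` is `fireLatList L (ρ,σ)`
for any list `L` in which each vertex `v` occurs exactly `u(v)` times (by
commutativity of the firing operators the result does not depend on `L`). -/
def fireLatList (L : List (ℤ × ℤ)) (s : RotorConfig × ((ℤ × ℤ) → ℤ)) :
    RotorConfig × ((ℤ × ℤ) → ℤ) :=
  L.foldl (fun s v => fireLat v s) s

/-- `ℓ_z = n - |x| - |y|` for `z = (x,y)`. -/
def ell (n : ℕ) (z : ℤ × ℤ) : ℤ := (n : ℤ) - |z.1| - |z.2|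

/-- `u'_n(o) = 2n(n+1)`, `u'_n(z) = ℓ_z (ℓ_z + 1)` for `o ≠ z ∈ D_{n-1}`
(and `u'_n = 0` off `D_{n-1}`, i.e. `u'_n` is a function on `D_{n-1}`). -/
def uAux (n : ℕ) (z : ℤ × ℤ) : ℕ :=
  if z = (0, 0) then 2 * n * (n + 1)
  else if |z.1| + |z.2| ≤ (n : ℤ) - 1 then (ell n z * (ell n z + 1)).toNat
  else 0

/-- `C₂ = {(x,y) ∈ Q ∩ D_{n-1} : x > 0, y ≥ 2, ℓ_{(x,y)} ≡ 2 mod 4}`. -/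
def C2 (n : ℕ) : Set (ℤ × ℤ) :=
  {w | 0 < w.1 ∧ 2 ≤ w.2 ∧ |w.1| + |w.2| ≤ (n : ℤ) - 1 ∧ ell n w % 4 = 2}

/-- `C₃ = {(x,y) ∈ Q ∩ D_{n-1} : x > 0, y ≥ 1, ℓ_{(x,y)} ≡ 3 mod 4}`. -/
def C3 (n : ℕ) : Set (ℤ × ℤ) :=
  {w | 0 < w.1 ∧ 1 ≤ w.2 ∧ |w.1| + |w.2| ≤ (n : ℤ) - 1 ∧ ell n w % 4 = 3}

/-- `C = ⋃_{i=0}^{3} Rⁱ (C₂ ∪ C₃)`. -/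
def Cset (n : ℕ) : Set (ℤ × ℤ) :=
  {z | ∃ i < 4, ∃ w ∈ C2 n ∪ C3 n, z = Rot^[i] w}

open Classical in
/-- `u_n = u'_n - 1_C`. -/
noncomputable def uOdo (n : ℕ) (z : ℤ × ℤ) : ℕ :=
  uAux n z - (if z ∈ Cset n then 1 else 0)

/-- The initial rotor configuration `ρ₀(z) = e_z^0`. -/
def rho0 : RotorConfig := fun _ => 0

/-- The chip configuration `(2n² + 2n + 1) δ_o`. -/
def sigma0 (n : ℕ) : (ℤ × ℤ) → ℤ :=
  fun z => if z = (0, 0) then 2 * (n : ℤ) ^ 2 + 2 * n + 1 else 0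

/-!
After firing `u_n` the rotor at `z` is `e_z^{u_n(z) mod 4}`. As `ℓ(ℓ+1) mod 4` depends only on
`ℓ mod 4`, and `1_C` corrects it on the bands `ℓ ≡ 3` and `ℓ ≡ 2` (off the line `y = 1`), the
rotors at `x, y > 0` point up on the bands `ℓ ≡ 0`, left on `ℓ ≡ 3`, right on `ℓ ≡ 2` and down on
`ℓ ≡ 1` (and on `ℓ ≡ 2` at `y = 1`), while on the axes and at `o` they point outwards. So the
potential equal to `n x - y` on the bands `ℓ ≡ 0, 3`, to `n y - x` on the bands `ℓ ≡ 1, 2`, and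
to `-(|x| + |y|)` on the axes, extended to `ℤ²` by rotation, strictly decreases along every rotor
edge leaving `D_{n-1}`; hence these edges form no cycle.
-/

open Fin.NatCast

theorem apply_ne_apply_zero_of_potential_lt {α β : Type*} [Preorder β] (Φ : α → β)
    {f : ℕ → α} {k : ℕ} (hk : 0 < k) (hΦ : ∀ i < k, Φ (f (i + 1)) < Φ (f i)) : f k ≠ f 0 := fun h =>
  (strictAntiOn_Iic_of_succ_lt (ψ := Φ ∘ f) (n := k) hΦ (Set.mem_Iic.2 (Nat.zero_le k))
    Set.self_mem_Iic hk).ne (by simp [h])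

theorem fireLatList_fst_apply (L : List (ℤ × ℤ)) (s : RotorConfig × ((ℤ × ℤ) → ℤ))
    (z : ℤ × ℤ) : (fireLatList L s).1 z = s.1 z + (L.count z : Fin 4) := by
  induction L generalizing s with
  | nil => simp [fireLatList]
  | cons v L ih =>
    rw [fireLatList, List.foldl_cons, ← fireLatList, ih]
    by_cases hzv : z = v
    · subst hzv
      simp only [fireLat, Function.update_self, List.count_cons_self, Nat.cast_succ]
      abel
    · simp [fireLat, Function.update_of_ne hzv, Ne.symm hzv]

theorem rot_iterate_four : Rot^[4] = id := funext fun _ => by simp [Rot]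

theorem rot_iterate_mod_four (k : ℕ) : Rot^[k % 4] = Rot^[k] := by
  conv_rhs => rw [← Nat.mod_add_div k 4, Function.iterate_add, Function.iterate_mul,
    rot_iterate_four, Function.iterate_id, Function.comp_id]

theorem rot_eq_zero_iff {z : ℤ × ℤ} : Rot z = (0, 0) ↔ z = (0, 0) := by
  simp [Rot, Prod.ext_iff, and_comm]

theorem rot_add (a b : ℤ × ℤ) : Rot (a + b) = Rot a + Rot b := by
  simp [Rot, add_comm]

theorem rot_induction {P : ℤ × ℤ → Prop} (hQ : ∀ x y : ℤ, 0 ≤ x → 0 < y → P (x, y))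
    (hrot : ∀ z, z ≠ (0, 0) → P z → P (Rot z)) {z : ℤ × ℤ} (hz : z ≠ (0, 0)) : P z := by
  have hrot' (z : ℤ × ℤ) (hz : z ≠ (0, 0)) (h : P z) : P (Rot z) ∧ Rot z ≠ (0, 0) :=
    ⟨hrot z hz h, fun h0 => hz (rot_eq_zero_iff.1 h0)⟩
  obtain ⟨x, y⟩ := z
  simp only [ne_eq, Prod.mk.injEq, not_and_or] at hz
  by_cases hQ0 : 0 ≤ x ∧ 0 < y
  · exact hQ x y hQ0.1 hQ0.2
  by_cases hQ1 : 0 < x ∧ y ≤ 0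
  · have h1 := hrot' (-y, x) (by simp; omega) (hQ _ _ (by omega) (by omega))
    simpa [Rot] using h1.1
  by_cases hQ2 : x ≤ 0 ∧ y < 0
  · have h1 := hrot' (-x, -y) (by simp; omega) (hQ _ _ (by omega) (by omega))
    have h2 := hrot' _ h1.2 h1.1
    simpa [Rot] using h2.1
  · have h1 := hrot' (y, -x) (by simp; omega) (hQ _ _ (by omega) (by omega))
    have h2 := hrot' _ h1.2 h1.1
    have h3 := hrot' _ h2.2 h2.1
    simpa [Rot] using h3.1

theorem quadIdx_rot {z : ℤ × ℤ} (hz : z ≠ (0, 0)) : quadIdx (Rot z) = (quadIdx z + 1) % 4 := by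
  simp only [ne_eq, Prod.ext_iff, not_and_or] at hz
  unfold quadIdx Rot
  split_ifs <;> omega

theorem targ_rot {z : ℤ × ℤ} (hz : z ≠ (0, 0)) (i : Fin 4) :
    targ (Rot z) i = Rot (targ z i) := by
  have hax : ((Rot z).1 = 0 ∨ (Rot z).2 = 0) ↔ (z.1 = 0 ∨ z.2 = 0) := by
    simp [Rot, or_comm]
  have hshift (k : ℕ) : Rot^[k + quadIdx (Rot z)] (0, 1) = Rot (Rot^[k + quadIdx z] (0, 1)) := by
    rw [← Function.iterate_succ_apply' Rot, quadIdx_rot hz, ← rot_iterate_mod_four,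
      ← rot_iterate_mod_four (Nat.succ _), show (k + (quadIdx z + 1) % 4) % 4 =
        (k + quadIdx z).succ % 4 by omega]
  have hshift0 := hshift 0
  simp only [zero_add] at hshift0
  simp only [targ, rot_eq_zero_iff, hz, if_false, hax, hshift, hshift0]
  split_ifs <;> rw [rot_add]

theorem ell_rot (n : ℕ) (z : ℤ × ℤ) : ell n (Rot z) = ell n z := by
  simp only [ell, Rot, abs_neg]; ring

theorem one_le_ell_iff {n : ℕ} {z : ℤ × ℤ} : 1 ≤ ell n z ↔ |z.1| + |z.2| ≤ (n : ℤ) - 1 := by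
  unfold ell; constructor <;> intro h <;> linarith

theorem ell_of_nonneg {n : ℕ} {x y : ℤ} (hx : 0 ≤ x) (hy : 0 ≤ y) :
    ell n (x, y) = n - x - y := by
  simp [ell, abs_of_nonneg hx, abs_of_nonneg hy]

theorem rot_mem_Cset {n : ℕ} {z : ℤ × ℤ} (h : z ∈ Cset n) : Rot z ∈ Cset n := by
  obtain ⟨i, -, w, hw, rfl⟩ := h
  exact ⟨(i + 1) % 4, Nat.mod_lt _ (by norm_num), w, hw, by
    rw [rot_iterate_mod_four, Function.iterate_succ_apply']⟩

theorem rot_mem_Cset_iff {n : ℕ} {z : ℤ × ℤ} : Rot z ∈ Cset n ↔ z ∈ Cset n := by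
  refine ⟨fun h => ?_, rot_mem_Cset⟩
  have h4 : Rot (Rot (Rot (Rot z))) = z := congrFun rot_iterate_four z
  exact h4 ▸ rot_mem_Cset (rot_mem_Cset (rot_mem_Cset h))

theorem notMem_Cset_of_axis {n : ℕ} {z : ℤ × ℤ} (hz : z.1 = 0 ∨ z.2 = 0) : z ∉ Cset n := by
  rintro ⟨i, hi, w, hw, rfl⟩
  have hw1 : 0 < w.1 ∧ 0 < w.2 := by
    rcases hw with h | h <;> exact ⟨h.1, by linarith [h.2.1]⟩
  interval_cases i <;> simp [Rot] at hz <;> omega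

theorem mem_Cset_of_pos {n : ℕ} {x y : ℤ} (hx : 0 < x) (hy : 0 < y) (hD : 1 ≤ ell n (x, y)) :
    (x, y) ∈ Cset n ↔ (ell n (x, y) % 4 = 2 ∧ 2 ≤ y) ∨ ell n (x, y) % 4 = 3 := by
  have hD' := one_le_ell_iff.1 hD
  constructor
  · rintro ⟨i, hi, w, hw, hzw⟩
    have hw1 : 0 < w.1 ∧ 0 < w.2 := by
      rcases hw with h | h <;> exact ⟨h.1, by linarith [h.2.1]⟩
    interval_cases i
    · subst hzw
      rcases hw with h | h
      · exact Or.inl ⟨h.2.2.2, h.2.1⟩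
      · exact Or.inr h.2.2.2
    all_goals simp [Rot, Prod.ext_iff] at hzw; omega
  · rintro (⟨h2, hy2⟩ | h3)
    · exact ⟨0, by norm_num, (x, y), Or.inl ⟨hx, hy2, hD', h2⟩, rfl⟩
    · exact ⟨0, by norm_num, (x, y), Or.inr ⟨hx, hy, hD', h3⟩, rfl⟩

theorem uOdo_rot (n : ℕ) (z : ℤ × ℤ) : uOdo n (Rot z) = uOdo n z := by
  have habs : |(Rot z).1| + |(Rot z).2| = |z.1| + |z.2| := by simp [Rot, add_comm]
  rw [uOdo, uOdo, uAux, uAux, rot_mem_Cset_iff]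
  simp only [rot_eq_zero_iff, ell_rot, habs]

theorem mul_add_one_emod_four (l : ℤ) :
    l * (l + 1) % 4 = if l % 4 = 1 ∨ l % 4 = 2 then 2 else 0 := by
  have h : l % 4 = 0 ∨ l % 4 = 1 ∨ l % 4 = 2 ∨ l % 4 = 3 := by omega
  rcases h with h | h | h | h <;> simp [Int.mul_emod, Int.add_emod, h]

theorem uOdo_of_pos {n : ℕ} {x y : ℤ} (hx : 0 < x) (hy : 0 < y) (hD : 1 ≤ ell n (x, y)) :
    uOdo n (x, y) = (ell n (x, y) * (ell n (x, y) + 1)).toNat -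
      if (ell n (x, y) % 4 = 2 ∧ 2 ≤ y) ∨ ell n (x, y) % 4 = 3 then 1 else 0 := by
  have hz : (x, y) ≠ ((0 : ℤ), (0 : ℤ)) := by simp [hx.ne']
  simp only [uOdo, uAux, if_neg hz, if_pos (one_le_ell_iff.1 hD), mem_Cset_of_pos hx hy hD]

theorem uOdo_of_axis {n : ℕ} {y : ℤ} (hy : 0 < y) (hD : 1 ≤ ell n (0, y)) :
    uOdo n (0, y) = (ell n (0, y) * (ell n (0, y) + 1)).toNat := by
  have hz : ((0 : ℤ), y) ≠ (0, 0) := by simp [hy.ne']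
  simp only [uOdo, uAux, if_neg hz, if_pos (one_le_ell_iff.1 hD),
    if_neg (notMem_Cset_of_axis (z := ((0 : ℤ), y)) (Or.inl rfl)), Nat.sub_zero]

theorem targ_natCast_of_pos {x y : ℤ} (hx : 0 < x) (hy : 0 < y) (m : ℕ) :
    targ (x, y) m = (x, y) + Rot^[m % 4] (0, 1) := by
  have hq : quadIdx (x, y) = 0 := if_pos ⟨hx.le, hy⟩
  simp [targ, hx.ne', hy.ne', hq, Fin.val_natCast]

theorem targ_natCast_of_axis {y : ℤ} (hy : 0 < y) {m : ℕ} (hm : m % 2 = 0) :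
    targ (0, y) m = (0, y + 1) := by
  have hq : quadIdx (0, y) = 0 := if_pos ⟨le_rfl, hy⟩
  have hm4 : m % 4 = 0 ∨ m % 4 = 2 := by omega
  rcases hm4 with h | h <;>
    simp [targ, hy.ne', hq, Fin.ext_iff, Fin.val_natCast, h]

noncomputable def rotorHead (n : ℕ) (z : ℤ × ℤ) : ℤ × ℤ := targ z (uOdo n z)

theorem rotorHead_rot (n : ℕ) {z : ℤ × ℤ} (hz : z ≠ (0, 0)) :
    rotorHead n (Rot z) = Rot (rotorHead n z) := by
  rw [rotorHead, rotorHead, uOdo_rot, targ_rot hz]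

theorem rotorHead_of_pos {n : ℕ} {x y : ℤ} (hx : 0 < x) (hy : 0 < y) (hD : 1 ≤ ell n (x, y)) :
    (ell n (x, y) % 4 = 0 ∧ rotorHead n (x, y) = (x, y + 1)) ∨
    ((ell n (x, y) % 4 = 1 ∨ ell n (x, y) % 4 = 2 ∧ y = 1) ∧
      rotorHead n (x, y) = (x, y - 1)) ∨
    (ell n (x, y) % 4 = 2 ∧ 2 ≤ y ∧ rotorHead n (x, y) = (x + 1, y)) ∨
    (ell n (x, y) % 4 = 3 ∧ rotorHead n (x, y) = (x - 1, y)) := by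
  have hu := uOdo_of_pos hx hy hD
  have hP := mul_add_one_emod_four (ell n (x, y))
  have hP0 : 0 < ell n (x, y) * (ell n (x, y) + 1) := mul_pos (by omega) (by omega)
  rw [rotorHead, targ_natCast_of_pos hx hy]
  have hl : ell n (x, y) % 4 = 0 ∨ ell n (x, y) % 4 = 1 ∨ (ell n (x, y) % 4 = 2 ∧ y = 1) ∨
      (ell n (x, y) % 4 = 2 ∧ 2 ≤ y) ∨ ell n (x, y) % 4 = 3 := by omega
  rcases hl with h | h | h | h | h
  · have hr : uOdo n (x, y) % 4 = 0 := by split_ifs at hu hP <;> omega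
    exact Or.inl ⟨h, by simp [hr]⟩
  · have hr : uOdo n (x, y) % 4 = 2 := by split_ifs at hu hP <;> omega
    exact Or.inr (Or.inl ⟨Or.inl h, by simp [hr, Rot, sub_eq_add_neg]⟩)
  · have hr : uOdo n (x, y) % 4 = 2 := by split_ifs at hu hP <;> omega
    exact Or.inr (Or.inl ⟨Or.inr h, by simp [hr, Rot, sub_eq_add_neg]⟩)
  · have hr : uOdo n (x, y) % 4 = 1 := by split_ifs at hu hP <;> omega
    exact Or.inr (Or.inr (Or.inl ⟨h.1, h.2, by simp [hr, Rot]⟩))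
  · have hr : uOdo n (x, y) % 4 = 3 := by split_ifs at hu hP <;> omega
    exact Or.inr (Or.inr (Or.inr ⟨h, by simp [hr, Rot, sub_eq_add_neg]⟩))

-- On the quadrant `Q` this is the potential described above; comparing with the sign of `x y`
-- makes it invariant under `Rot`.
def pot (n : ℕ) (z : ℤ × ℤ) : ℤ :=
  if z.1 = 0 ∨ z.2 = 0 then -(|z.1| + |z.2|)
  else if (ell n z % 4 = 0 ∨ ell n z % 4 = 3 ↔ 0 < z.1 * z.2) then n * |z.1| - |z.2|
  else n * |z.2| - |z.1|

theorem pot_rot (n : ℕ) (z : ℤ × ℤ) : pot n (Rot z) = pot n z := by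
  rw [pot, pot, ell_rot]
  by_cases hax : z.1 = 0 ∨ z.2 = 0
  · simp [Rot, hax, or_comm, add_comm]
  · have hxy : z.1 * z.2 ≠ 0 := by simpa [not_or] using hax
    have hsign : 0 < (Rot z).1 * (Rot z).2 ↔ ¬ 0 < z.1 * z.2 := by
      rw [show (Rot z).1 * (Rot z).2 = -(z.1 * z.2) by simp [Rot]; ring]
      omega
    simp only [hsign]
    simp only [Rot, neg_eq_zero, abs_neg, hax, or_comm (a := z.2 = 0), if_false]
    split_ifs <;> tauto

theorem pot_of_pos {n : ℕ} {x y : ℤ} (hx : 0 < x) (hy : 0 < y) :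
    pot n (x, y) =
      if (n - x - y) % 4 = 0 ∨ (n - x - y) % 4 = 3 then n * x - y else n * y - x := by
  simp [pot, hx.ne', hy.ne', mul_pos hx hy, abs_of_pos hx, abs_of_pos hy,
    ell_of_nonneg hx.le hy.le]

theorem pot_rotorHead_lt_of_pos {n : ℕ} {x y : ℤ} (hx : 0 < x) (hy : 0 < y)
    (hD : 1 ≤ ell n (x, y)) : pot n (rotorHead n (x, y)) < pot n (x, y) := by
  have hl := ell_of_nonneg (n := n) hx.le hy.le
  rw [pot_of_pos hx hy]
  rcases rotorHead_of_pos hx hy hD with ⟨h, hr⟩ | ⟨h, hr⟩ | ⟨h, -, hr⟩ | ⟨h, hr⟩ <;>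
    rw [hr] <;> rw [hl] at h hD
  · rw [pot_of_pos hx (by omega)]
    split_ifs <;> omega
  · rcases (show 1 < y ∨ y = 1 by omega) with hy1 | rfl
    · rw [pot_of_pos hx (by omega)]
      split_ifs <;> first | omega | nlinarith
    · simp [pot, abs_of_pos hx]
      split_ifs <;> omega
  · rw [pot_of_pos (by omega) hy]
    split_ifs <;> omega
  · rcases (show 1 < x ∨ x = 1 by omega) with hx1 | rfl
    · rw [pot_of_pos (by omega) hy]
      split_ifs <;> first | omega | nlinarith
    · simp [pot, abs_of_pos hy]
      split_ifs <;> omega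

theorem pot_rotorHead_lt_of_axis {n : ℕ} {y : ℤ} (hy : 0 < y) (hD : 1 ≤ ell n (0, y)) :
    pot n (rotorHead n (0, y)) < pot n (0, y) := by
  have hP := mul_add_one_emod_four (ell n (0, y))
  have hu := uOdo_of_axis hy hD
  rw [rotorHead, targ_natCast_of_axis hy (by split_ifs at hP <;> omega)]
  simp [pot, abs_of_pos hy, abs_of_pos (show 0 < y + 1 by omega)]

theorem pot_rotorHead_origin_lt (n : ℕ) : pot n (rotorHead n (0, 0)) < pot n (0, 0) := by
  obtain ⟨r, hr⟩ := Nat.even_mul_succ_self n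
  have hu : uOdo n (0, 0) % 4 = 0 := by
    simp only [uOdo, uAux, if_pos, if_neg (notMem_Cset_of_axis (z := ((0 : ℤ), (0 : ℤ)))
      (Or.inl rfl))]
    rw [show 2 * n * (n + 1) = 2 * (n * (n + 1)) by ring]
    omega
  simp [rotorHead, targ, Fin.val_natCast, hu, pot]

theorem pot_rotorHead_lt {n : ℕ} {z : ℤ × ℤ} (hz : 1 ≤ ell n z) :
    pot n (rotorHead n z) < pot n z := by
  by_cases h0 : z = (0, 0)
  · subst h0
    exact pot_rotorHead_origin_lt n
  revert hz
  refine rot_induction (P := fun z => 1 ≤ ell n z → pot n (rotorHead n z) < pot n z) ?_ ?_ h0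
  · intro x y hx hy hD
    rcases hx.lt_or_eq' with hx | rfl
    · exact pot_rotorHead_lt_of_pos hx hy hD
    · exact pot_rotorHead_lt_of_axis hy hD
  · intro z hz ih hD
    rw [rotorHead_rot n hz, pot_rot, pot_rot]
    exact ih (ell_rot n z ▸ hD)

theorem rotor_config_acyclic_general (n : ℕ)
    (L : List (ℤ × ℤ)) (hL : ∀ v, L.count v = uOdo n v)
    (ρn : RotorConfig) (σn : (ℤ × ℤ) → ℤ)
    (h : fireLatList L (rho0, sigma0 n) = (ρn, σn)) :
    ∀ (k : ℕ) (f : ℕ → ℤ × ℤ), 0 < k →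
      (∀ i < k, |(f i).1| + |(f i).2| ≤ (n : ℤ) - 1) →
      (∀ i < k, f (i + 1) = targ (f i) (ρn (f i))) →
      f k ≠ f 0 := by
  intro k f hk hD hstep
  have hρ (z : ℤ × ℤ) : ρn z = uOdo n z := by
    simpa [h, rho0, hL] using fireLatList_fst_apply L (rho0, sigma0 n) z
  refine apply_ne_apply_zero_of_potential_lt (pot n) hk fun i hi => ?_
  rw [hstep i hi, hρ]
  exact pot_rotorHead_lt (one_le_ell_iff.2 (hD i hi))

/-- Fix `n ≥ 1` and work in the induced subgraph `D_n` of the layered square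
lattice `Ẑ²` with the outer layer `L_n` as sinks (since `u_n` is supported on
`D_{n-1}`, whose out-edges stay in `D_n`, this is realized by firing in `Ẑ²`
itself).  With `(ρ_n, σ_n) = F^{u_n}(ρ₀, (2n²+2n+1)δ_o)`, where `F^{u_n}` is
realized by firing along any list `L` containing each vertex `v` exactly
`u_n(v)` times, the rotor configuration `ρ_n` on `D_{n-1}` is acyclic: there is
no directed cycle `f 0, f 1, …, f k = f 0` (`k ≥ 1`) with every `f i ∈ D_{n-1}`
and each `f (i+1)` the head of the rotor edge of `ρ_n` at `f i`. -/
theorem rotor_config_acyclic (n : ℕ) (hn : 1 ≤ n)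
    (L : List (ℤ × ℤ)) (hL : ∀ v, L.count v = uOdo n v)
    (ρn : RotorConfig) (σn : (ℤ × ℤ) → ℤ)
    (h : fireLatList L (rho0, sigma0 n) = (ρn, σn)) :
    ∀ (k : ℕ) (f : ℕ → ℤ × ℤ), 0 < k →
      (∀ i < k, |(f i).1| + |(f i).2| ≤ (n : ℤ) - 1) →
      (∀ i < k, f (i + 1) = targ (f i) (ρn (f i))) →
      f k ≠ f 0 :=
  rotor_config_acyclic_general n L hL ρn σn h
end
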